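/- arXiv:math/9602208 — 3 statements merged into one kernel-verified Lean document; each statement's English description precedes it below -/
import Mathlib

section
/- Let X be a separable stable real Banach space, F_X its space of types with the topology of pointwise convergence on X, and F̂_X = F_X ∪ {∞} its one-point (Alexandroff) compactification. Suppose g : F_X × F_X → ℝ is a function such that for all σ, τ ∈ F_X, for every bounded sequence (x_n) determining σ and every bounded sequence (y_m) determining τ, the iterated limit L = lim_n lim_m ‖x_n − y_m‖ exists and g(σ, τ) = exp(−L). Then the extension ĝ : F̂_X × F̂_X → ℝ defined by ĝ(σ, τ) = g(σ, τ) for σ, τ ∈ F_X and ĝ(σ, τ) = 0 whenever σ = ∞ or τ = ∞, is separately continuous: for each fixed τ ∈ F̂_X the map σ ↦ ĝ(σ, τ) is continuous on F̂_X, and for each fixed σ ∈ F̂_X the map τ ↦ ĝ(σ, τ) is continuous on F̂_X. -/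
open Filter Topology OnePoint

/-- A sequence in a normed space is bounded. -/
def IsBoundedSeq {X : Type*} [NormedAddCommGroup X] (x : ℕ → X) : Prop :=
  ∃ C : ℝ, ∀ n, ‖x n‖ ≤ C

/-- A real Banach space is *stable* if for all bounded sequences `(x n)`, `(y m)` in `X` such
that both iterated limits of `‖x n + y m‖` exist, the two iterated limits coincide. -/
def IsStable (X : Type*) [NormedAddCommGroup X] : Prop :=
  ∀ (x y : ℕ → X), IsBoundedSeq x → IsBoundedSeq y →
    ∀ (f g : ℕ → ℝ) (a b : ℝ),
      (∀ n, Tendsto (fun m => ‖x n + y m‖) atTop (𝓝 (f n))) →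
      Tendsto f atTop (𝓝 a) →
      (∀ m, Tendsto (fun n => ‖x n + y m‖) atTop (𝓝 (g m))) →
      Tendsto g atTop (𝓝 b) →
      a = b

/-- The bounded sequence `(x n)` determines the type `τ`, i.e. `τ v = lim_n ‖v + x n‖`. -/
def DeterminesType {X : Type*} [NormedAddCommGroup X] (x : ℕ → X) (τ : X → ℝ) : Prop :=
  IsBoundedSeq x ∧ ∀ v : X, Tendsto (fun n => ‖v + x n‖) atTop (𝓝 (τ v))

/-- A *type* on `X` is a function realized as `τ v = lim_n ‖v + x n‖` for some bounded
sequence `(x n)` in `X`. -/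
def IsType {X : Type*} [NormedAddCommGroup X] (τ : X → ℝ) : Prop :=
  ∃ x : ℕ → X, DeterminesType x τ

/-- The space of types on `X`, topologized by pointwise convergence on `X`. -/
def TypeSpace (X : Type*) [NormedAddCommGroup X] : Type _ := {τ : X → ℝ // IsType τ}

instance (X : Type*) [NormedAddCommGroup X] : TopologicalSpace (TypeSpace X) :=
  inferInstanceAs (TopologicalSpace {τ : X → ℝ // IsType τ})

/-- The degenerate type `τ_x : y ↦ ‖x + y‖`. -/
def degenType {X : Type*} [NormedAddCommGroup X] (x : X) : TypeSpace X :=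
  ⟨fun y => ‖x + y‖, fun _ => x, ⟨‖x‖, fun _ => le_rfl⟩, fun v => by
    show Tendsto (fun _ : ℕ => ‖v + x‖) atTop (𝓝 ‖x + v‖)
    rw [add_comm x v]; exact tendsto_const_nhds⟩

/-- A bundled separable reflexive real Banach space. -/
structure SepReflBanach where
  carrier : Type
  [normedGrp : NormedAddCommGroup carrier]
  [normedMod : NormedSpace ℝ carrier]
  [complete : CompleteSpace carrier]
  [separable : TopologicalSpace.SeparableSpace carrier]
  reflexive : Function.Surjective (NormedSpace.inclusionInDoubleDual ℝ carrier)

attribute [instance] SepReflBanach.normedGrp SepReflBanach.normedMod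
  SepReflBanach.complete SepReflBanach.separable

/-!
Write `L(σ, τ) = lim_n lim_m ‖x_n - y_m‖`, so that `g = exp (-L)`. Stability says that the two
iterated limits agree, which makes `L` symmetric; this reduces separate continuity to continuity
in the first variable. Since types are `1`-Lipschitz, the topology of pointwise convergence is
metrizable for separable `X`, so continuity of `σ ↦ L(σ, τ)` can be tested on sequences
`σ_k → σ`: a diagonal choice of points `z_k` from sequences determining the `σ_k` determines
`σ`, and stability applied to `(z_k)` and a sequence determining `τ` identifies the limit of
`L(σ_k, τ)` with `L(σ, τ)`. At `∞`, `L(σ, τ) ≥ σ(0) - τ(0)` and the sets `{σ | σ(0) ≤ M}` are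
compact (the same diagonal argument), so `g(σ, τ) → 0` as `σ → ∞`.
-/

open TopologicalSpace

theorem Filter.Tendsto.of_dist_lt_one_div {α : Type*} [PseudoMetricSpace α] {u v : ℕ → α} {a : α}
    (hu : Tendsto u atTop (𝓝 a)) (h : ∀ᶠ j in atTop, dist (v j) (u j) < 1 / (j + 1)) :
    Tendsto v atTop (𝓝 a) :=
  hu.congr_dist <| squeeze_zero' (.of_forall fun _ => dist_nonneg)
    (h.mono fun _ hj => (dist_comm _ _).trans_le hj.le) tendsto_one_div_add_atTop_nhds_zero_nat

section Equicontinuous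

variable {ι X α : Type*} [TopologicalSpace ι] [TopologicalSpace X] [PseudoMetricSpace α]
  {F : ι → X → α}

theorem Equicontinuous.isInducing_restrict (hF : Equicontinuous F) (hind : IsInducing F)
    {s : Set X} (hs : Dense s) : IsInducing fun i (y : s) => F i y := by
  have hcont : Continuous fun i (y : s) => F i y :=
    continuous_pi fun y => (continuous_apply y.1).comp hind.continuous
  refine isInducing_iff_nhds.2 fun i => le_antisymm (hcont.tendsto i).le_comap ?_
  rw [hind.nhds_eq_comap i, ← tendsto_iff_comap]
  refine tendsto_pi_nhds.2 fun x => (hF x).tendsto_of_mem_closure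
    ((hF.continuous i).tendsto x |>.mono_left nhdsWithin_le_nhds) (fun y hy => ?_)
    (hs.closure_eq ▸ Set.mem_univ x)
  exact ((continuous_apply (A := fun _ : s => α) ⟨y, hy⟩).tendsto _).comp tendsto_comap

theorem Equicontinuous.pseudoMetrizableSpace [SeparableSpace X] (hF : Equicontinuous F)
    (hind : IsInducing F) : PseudoMetrizableSpace ι := by
  obtain ⟨s, hs_countable, hs_dense⟩ := exists_countable_dense X
  have := hs_countable.to_subtype
  exact (hF.isInducing_restrict hind hs_dense).pseudoMetrizableSpace

end Equicontinuous

theorem exists_subseq_tendsto_of_lipschitzWith {X : Type*} [PseudoMetricSpace X]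
    [SeparableSpace X] {u : ℕ → X → ℝ} {K : NNReal} (hu : ∀ k, LipschitzWith K (u k))
    {B : X → ℝ} (hB : ∀ k v, |u k v| ≤ B v) :
    ∃ f : X → ℝ, ∃ φ : ℕ → ℕ, StrictMono φ ∧ ∀ v, Tendsto (fun k => u (φ k) v) atTop (𝓝 (f v)) := by
  set S := {f : X → ℝ | LipschitzWith K f} ∩ Set.univ.pi fun v => Set.Icc (-B v) (B v)
  have : CompactSpace S := isCompact_iff_compactSpace.1 <|
    (isCompact_univ_pi fun v => isCompact_Icc).inter_left (isClosed_setOfPred_lipschitzWith K)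
  have : PseudoMetrizableSpace S :=
    (LipschitzWith.uniformEquicontinuous (Subtype.val : S → X → ℝ) K fun f => f.2.1).equicontinuous
      |>.pseudoMetrizableSpace IsInducing.subtypeVal
  obtain ⟨f, φ, hφ, hlim⟩ := CompactSpace.tendsto_subseq
    fun k => (⟨u k, hu k, fun v _ => abs_le.1 (hB k v)⟩ : S)
  exact ⟨f.1, φ, hφ, tendsto_pi_nhds.1 ((continuous_subtype_val.tendsto f).comp hlim)⟩

section Types

variable {X : Type*} [NormedAddCommGroup X]

theorem IsBoundedSeq.neg {x : ℕ → X} (hx : IsBoundedSeq x) : IsBoundedSeq (-x) := by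
  obtain ⟨C, hC⟩ := hx
  exact ⟨C, fun n => by simpa using hC n⟩

namespace DeterminesType

variable {x : ℕ → X} {τ : X → ℝ}

theorem tendsto_norm (h : DeterminesType x τ) : Tendsto (fun n => ‖x n‖) atTop (𝓝 (τ 0)) := by
  simpa using h.2 0

theorem tendsto_norm_sub (h : DeterminesType x τ) (v : X) :
    Tendsto (fun n => ‖v - x n‖) atTop (𝓝 (τ (-v))) := by
  simpa [← sub_eq_neg_add, norm_sub_rev] using h.2 (-v)

theorem tendsto_norm_sub_left (h : DeterminesType x τ) (v : X) :
    Tendsto (fun n => ‖x n - v‖) atTop (𝓝 (τ (-v))) := by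
  simpa [neg_add_eq_sub] using h.2 (-v)

theorem lipschitzWith (h : DeterminesType x τ) : LipschitzWith 1 τ :=
  (isClosed_setOfPred_lipschitzWith 1).mem_of_tendsto (tendsto_pi_nhds.2 h.2) <|
    .of_forall fun n => LipschitzWith.of_le_add fun v w => by
      simpa [dist_eq_norm] using norm_le_norm_add_norm_sub' (v + x n) (w + x n)

theorem nonneg (h : DeterminesType x τ) (v : X) : 0 ≤ τ v :=
  ge_of_tendsto' (h.2 v) fun _ => norm_nonneg _

theorem le_norm_add (h : DeterminesType x τ) (v : X) : τ v ≤ ‖v‖ + τ 0 :=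
  le_of_tendsto_of_tendsto' (h.2 v) (h.tendsto_norm.const_add _) fun _ => norm_add_le _ _

theorem norm_sub_le (h : DeterminesType x τ) (v : X) : ‖v‖ - τ 0 ≤ τ v :=
  le_of_tendsto_of_tendsto' (h.tendsto_norm.const_sub _) (h.2 v) fun n => by
    simpa using norm_sub_norm_le v (-x n)

end DeterminesType

theorem IsType.lipschitzWith {τ : X → ℝ} (h : IsType τ) : LipschitzWith 1 τ :=
  h.choose_spec.lipschitzWith

theorem exists_determinesType_diagonal [SeparableSpace X] {ρ : ℕ → X → ℝ} {f : X → ℝ}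
    {x : ℕ → ℕ → X} (hx : ∀ j, DeterminesType (x j) (ρ j))
    (hρ : ∀ v, Tendsto (fun j => ρ j v) atTop (𝓝 (f v)))
    {P : ℕ → X → Prop} (hP : ∀ j, ∀ᶠ m in atTop, P j (x j m)) :
    ∃ z : ℕ → X, DeterminesType z f ∧ ∀ j, P j (z j) := by
  obtain ⟨D, hD⟩ := exists_dense_seq X
  have hz : ∀ j, ∃ z, (∀ i ∈ Set.Iic j, dist ‖D i + z‖ (ρ j (D i)) < 1 / (j + 1)) ∧
      ‖z‖ < ρ j 0 + 1 ∧ P j z := by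
    intro j
    have happrox : ∀ᶠ m in atTop, ∀ i ∈ Set.Iic j, dist ‖D i + x j m‖ (ρ j (D i)) < 1 / (j + 1) :=
      (Set.finite_Iic j).eventually_all.2 fun i _ =>
        ((hx j).2 (D i)).eventually (Metric.ball_mem_nhds _ (by positivity))
    have hnorm : ∀ᶠ m in atTop, ‖x j m‖ < ρ j 0 + 1 :=
      (hx j).tendsto_norm.eventually (gt_mem_nhds (lt_add_one _))
    obtain ⟨m, ⟨hm_approx, hm_norm⟩, hm_P⟩ := ((happrox.and hnorm).and (hP j)).exists
    exact ⟨x j m, hm_approx, hm_norm, hm_P⟩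
  choose z hzD hz0 hzP using hz
  refine ⟨z, ⟨?_, fun v => ?_⟩, hzP⟩
  · obtain ⟨B, hB⟩ := (hρ 0).bddAbove_range
    exact ⟨B + 1, fun j => (hz0 j).le.trans (by linarith [hB (Set.mem_range_self j)])⟩
  have hequi : Equicontinuous fun j v => ‖v + z j‖ :=
    (LipschitzWith.uniformEquicontinuous _ 1 fun j => LipschitzWith.of_le_add fun v w => by
      simpa [dist_eq_norm] using norm_le_norm_add_norm_sub' (v + z j) (w + z j)).equicontinuous
  have hf : Continuous f := (tendsto_pi_nhds.2 hρ).continuous_of_equicontinuous <|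
    (LipschitzWith.uniformEquicontinuous ρ 1 fun j => (hx j).lipschitzWith).equicontinuous
  refine hD.induction_on v (hequi.isClosed_setOfPred_tendsto hf) fun i => ?_
  exact (hρ (D i)).of_dist_lt_one_div ((eventually_ge_atTop i).mono fun j hj => hzD j i hj)

namespace TypeSpace

theorem continuous_eval (v : X) : Continuous fun σ : TypeSpace X => σ.1 v :=
  (continuous_apply v).comp continuous_subtype_val

theorem tendsto_iff {ι : Type*} {l : Filter ι} {ρ : ι → TypeSpace X} {σ : TypeSpace X} :
    Tendsto ρ l (𝓝 σ) ↔ ∀ v, Tendsto (fun i => (ρ i).1 v) l (𝓝 (σ.1 v)) :=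
  IsInducing.subtypeVal.tendsto_nhds_iff.trans tendsto_pi_nhds

instance [SeparableSpace X] : PseudoMetrizableSpace (TypeSpace X) :=
  (LipschitzWith.uniformEquicontinuous _ 1 fun σ : TypeSpace X => σ.2.lipschitzWith).equicontinuous
    |>.pseudoMetrizableSpace IsInducing.subtypeVal

theorem isCompact_setOf_eval_zero_le [SeparableSpace X] (M : ℝ) :
    IsCompact {σ : TypeSpace X | σ.1 0 ≤ M} := by
  refine IsSeqCompact.isCompact fun σ hσ => ?_
  choose x hx using fun k => (σ k).2
  have hbound : ∀ k v, |(σ k).1 v| ≤ ‖v‖ + M := fun k v => by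
    rw [abs_of_nonneg ((hx k).nonneg v)]
    linarith [(hx k).le_norm_add v, show (σ k).1 0 ≤ M from hσ k]
  obtain ⟨f, φ, hφ, hlim⟩ := exists_subseq_tendsto_of_lipschitzWith
    (fun k => (hx k).lipschitzWith) hbound
  obtain ⟨z, hz, -⟩ := exists_determinesType_diagonal (fun k => hx (φ k)) hlim
    (P := fun _ _ => True) fun _ => .of_forall fun _ => trivial
  exact ⟨⟨f, z, hz⟩, le_of_tendsto' (hlim 0) fun k => hσ (φ k), φ, hφ, tendsto_iff.2 hlim⟩

theorem tendsto_eval_zero_coclosedCompact [SeparableSpace X] :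
    Tendsto (fun σ : TypeSpace X => σ.1 0) (coclosedCompact (TypeSpace X)) atTop := by
  refine tendsto_atTop.2 fun M => hasBasis_coclosedCompact.mem_iff.2
    ⟨_, ⟨isClosed_le (continuous_eval 0) continuous_const, isCompact_setOf_eval_zero_le M⟩, ?_⟩
  exact fun σ hσ => (not_le.1 (Set.notMem_ofPred_iff.1 hσ)).le

end TypeSpace

theorem IsStable.eq_of_determinesType (hX : IsStable X) {σ τ : X → ℝ} {xs ys : ℕ → X}
    (hxs : DeterminesType xs σ) (hys : DeterminesType ys τ) {a b : ℝ}
    (ha : Tendsto (fun n => τ (-xs n)) atTop (𝓝 a))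
    (hb : Tendsto (fun m => σ (-ys m)) atTop (𝓝 b)) : a = b :=
  hX xs (-ys) hxs.1 hys.1.neg _ _ a b
    (fun n => by simpa [← sub_eq_add_neg] using hys.tendsto_norm_sub (xs n)) ha
    (fun m => by simpa [← sub_eq_add_neg] using hxs.tendsto_norm_sub_left (ys m)) hb

/-- `τ (-x_n) = lim_m ‖x_n - y_m‖` for any `(y_m)` determining `τ`, so `L σ τ` is the iterated
limit `lim_n lim_m ‖x_n - y_m‖`. -/
def IsIteratedDist (L : TypeSpace X → TypeSpace X → ℝ) : Prop :=
  ∀ (σ τ : TypeSpace X) (xs : ℕ → X), DeterminesType xs σ.1 →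
    Tendsto (fun n => τ.1 (-xs n)) atTop (𝓝 (L σ τ))

namespace IsIteratedDist

variable {L : TypeSpace X → TypeSpace X → ℝ}

theorem nonneg (hL : IsIteratedDist L) (σ τ : TypeSpace X) : 0 ≤ L σ τ := by
  obtain ⟨xs, hxs⟩ := σ.2
  obtain ⟨_, hτ⟩ := τ.2
  exact ge_of_tendsto' (hL σ τ xs hxs) fun _ => hτ.nonneg _

theorem le_add (hL : IsIteratedDist L) (σ τ : TypeSpace X) : L σ τ ≤ σ.1 0 + τ.1 0 := by
  obtain ⟨xs, hxs⟩ := σ.2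
  obtain ⟨_, hτ⟩ := τ.2
  refine le_of_tendsto_of_tendsto' (hL σ τ xs hxs) (hxs.tendsto_norm.add_const _) fun n => ?_
  simpa using hτ.le_norm_add (-xs n)

theorem sub_le (hL : IsIteratedDist L) (σ τ : TypeSpace X) : σ.1 0 - τ.1 0 ≤ L σ τ := by
  obtain ⟨xs, hxs⟩ := σ.2
  obtain ⟨_, hτ⟩ := τ.2
  refine le_of_tendsto_of_tendsto' (hxs.tendsto_norm.sub_const _) (hL σ τ xs hxs) fun n => ?_
  simpa using hτ.norm_sub_le (-xs n)

theorem tendsto_coclosedCompact [SeparableSpace X] (hL : IsIteratedDist L) (τ : TypeSpace X) :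
    Tendsto (fun σ => L σ τ) (coclosedCompact (TypeSpace X)) atTop :=
  tendsto_atTop_mono (hL.sub_le · τ) (tendsto_atTop_add_const_right _ (-τ.1 0)
    TypeSpace.tendsto_eval_zero_coclosedCompact)

theorem symm (hL : IsIteratedDist L) (hX : IsStable X) (σ τ : TypeSpace X) : L σ τ = L τ σ := by
  obtain ⟨xs, hxs⟩ := σ.2
  obtain ⟨ys, hys⟩ := τ.2
  exact hX.eq_of_determinesType hxs hys (hL σ τ xs hxs) (hL τ σ ys hys)

theorem eq_of_tendsto [SeparableSpace X] (hL : IsIteratedDist L) (hX : IsStable X)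
    {ρ : ℕ → TypeSpace X} {σ τ : TypeSpace X} (hρ : Tendsto ρ atTop (𝓝 σ)) {c : ℝ}
    (hc : Tendsto (fun j => L (ρ j) τ) atTop (𝓝 c)) : c = L σ τ := by
  choose x hx using fun j => (ρ j).2
  obtain ⟨ys, hys⟩ := τ.2
  obtain ⟨z, hz, hzL⟩ := exists_determinesType_diagonal hx (TypeSpace.tendsto_iff.1 hρ)
    (P := fun j w => dist (τ.1 (-w)) (L (ρ j) τ) < 1 / (j + 1))
    fun j => (hL (ρ j) τ (x j) (hx j)).eventually (Metric.ball_mem_nhds _ (by positivity))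
  rw [hL.symm hX]
  exact hX.eq_of_determinesType hz hys (hc.of_dist_lt_one_div (.of_forall hzL)) (hL τ σ ys hys)

theorem continuous_left [SeparableSpace X] (hL : IsIteratedDist L) (hX : IsStable X)
    (τ : TypeSpace X) : Continuous fun σ => L σ τ := by
  refine continuous_iff_seqContinuous.2 fun ρ σ hρ => ?_
  have hbound : ∀ᶠ j in atTop, L (ρ j) τ ∈ Set.Icc 0 (σ.1 0 + 1 + τ.1 0) := by
    filter_upwards [(TypeSpace.tendsto_iff.1 hρ 0).eventually (gt_mem_nhds (lt_add_one _))]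
      with j hj
    exact ⟨hL.nonneg _ _, (hL.le_add _ _).trans (by linarith)⟩
  refine isCompact_Icc.tendsto_nhds_of_unique_mapClusterPt hbound fun c _ hc => ?_
  obtain ⟨ψ, hψ, hcψ⟩ := hc.tendsto_subseq
  exact hL.eq_of_tendsto hX (hρ.comp hψ.tendsto_atTop) hcψ

end IsIteratedDist

theorem exists_isIteratedDist_eq_exp {g : TypeSpace X → TypeSpace X → ℝ}
    (hg : ∀ (σ τ : TypeSpace X) (xs ys : ℕ → X),
      DeterminesType xs σ.1 → DeterminesType ys τ.1 →
      ∃ (L : ℝ) (f : ℕ → ℝ),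
        (∀ n, Tendsto (fun m => ‖xs n - ys m‖) atTop (𝓝 (f n))) ∧
        Tendsto f atTop (𝓝 L) ∧ g σ τ = Real.exp (-L)) :
    ∃ L, IsIteratedDist L ∧ g = fun σ τ => Real.exp (-L σ τ) := by
  refine ⟨fun σ τ => -Real.log (g σ τ), fun σ τ xs hxs => ?_, funext₂ fun σ τ => ?_⟩
  · obtain ⟨ys, hys⟩ := τ.2
    obtain ⟨L, f, hf, hfL, hgL⟩ := hg σ τ xs ys hxs hys
    have : f = fun n => τ.1 (-xs n) :=
      funext fun n => tendsto_nhds_unique (hf n) (hys.tendsto_norm_sub (xs n))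
    simpa [hgL, this] using hfL
  · obtain ⟨xs, hxs⟩ := σ.2
    obtain ⟨ys, hys⟩ := τ.2
    obtain ⟨L, -, -, -, hgL⟩ := hg σ τ xs ys hxs hys
    simp [hgL]

end Types

theorem stmt_6_general (X : Type*) [NormedAddCommGroup X]
    [TopologicalSpace.SeparableSpace X] (hX : IsStable X)
    (g : TypeSpace X → TypeSpace X → ℝ)
    (hg : ∀ (σ τ : TypeSpace X) (xs ys : ℕ → X),
      DeterminesType xs σ.1 → DeterminesType ys τ.1 →
      ∃ (L : ℝ) (f : ℕ → ℝ),
        (∀ n, Tendsto (fun m => ‖xs n - ys m‖) atTop (𝓝 (f n))) ∧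
        Tendsto f atTop (𝓝 L) ∧ g σ τ = Real.exp (-L))
    (ghat : OnePoint (TypeSpace X) → OnePoint (TypeSpace X) → ℝ)
    (hghat : ∀ σ τ : TypeSpace X, ghat σ τ = g σ τ)
    (hinfl : ∀ τ : OnePoint (TypeSpace X), ghat ∞ τ = 0)
    (hinfr : ∀ σ : OnePoint (TypeSpace X), ghat σ ∞ = 0) :
    (∀ τ : OnePoint (TypeSpace X), Continuous fun σ => ghat σ τ) ∧
    (∀ σ : OnePoint (TypeSpace X), Continuous fun τ => ghat σ τ) := by
  obtain ⟨L, hL, rfl⟩ := exists_isIteratedDist_eq_exp hg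
  have hleft : ∀ τ, Continuous fun σ => ghat σ τ := by
    intro τ
    induction τ with
    | infty => simpa only [hinfr] using continuous_const
    | coe τ =>
      rw [OnePoint.continuous_iff]
      simp only [hinfl, hghat]
      exact ⟨Real.tendsto_exp_neg_atTop_nhds_zero.comp (hL.tendsto_coclosedCompact τ),
        (hL.continuous_left hX τ).neg.rexp⟩
  have hsymm : ∀ σ τ, ghat σ τ = ghat τ σ := by
    intro σ τ
    induction σ <;> induction τ <;> simp only [hinfl, hinfr, hghat, hL.symm hX]
  exact ⟨hleft, fun σ => by simpa only [hsymm σ] using hleft σ⟩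

/-- Let `X` be a separable stable real Banach space and let
`g(σ, τ) = exp (−[σ, −τ])` on the space of types (computed through any determining sequences,
i.e. `[σ, −τ] = lim_n lim_m ‖x_n − y_m‖`). Then the extension `ĝ` of `g` to the one-point
compactification of the space of types, vanishing whenever one argument is `∞`, is separately
continuous. -/
theorem stmt_6 (X : Type*) [NormedAddCommGroup X] [NormedSpace ℝ X] [CompleteSpace X]
    [TopologicalSpace.SeparableSpace X] (hX : IsStable X)
    (g : TypeSpace X → TypeSpace X → ℝ)
    (hg : ∀ (σ τ : TypeSpace X) (xs ys : ℕ → X),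
      DeterminesType xs σ.1 → DeterminesType ys τ.1 →
      ∃ (L : ℝ) (f : ℕ → ℝ),
        (∀ n, Tendsto (fun m => ‖xs n - ys m‖) atTop (𝓝 (f n))) ∧
        Tendsto f atTop (𝓝 L) ∧ g σ τ = Real.exp (-L))
    (ghat : OnePoint (TypeSpace X) → OnePoint (TypeSpace X) → ℝ)
    (hghat : ∀ σ τ : TypeSpace X, ghat σ τ = g σ τ)
    (hinfl : ∀ τ : OnePoint (TypeSpace X), ghat ∞ τ = 0)
    (hinfr : ∀ σ : OnePoint (TypeSpace X), ghat σ ∞ = 0) :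
    (∀ τ : OnePoint (TypeSpace X), Continuous fun σ => ghat σ τ) ∧
    (∀ σ : OnePoint (TypeSpace X), Continuous fun τ => ghat σ τ) :=
  stmt_6_general X hX g hg ghat hghat hinfl hinfr
end

section
/- Let R be a reflexive real Banach space and let G ⊆ L(R) be a set of surjective linear isometries of R which is commutative, i.e. A ∘ B = B ∘ A for all A, B ∈ G. If S and T both belong to the closure of G in the weak operator topology of L(R), then S ∘ T = T ∘ S. -/
open Filter Topology OnePoint

theorem Set.closure_subset_centralizer_closure {M : Type*} [Mul M] [TopologicalSpace M]
    [SeparatelyContinuousMul M] [T2Space M] {s : Set M} (hs : s ⊆ s.centralizer) :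
    closure s ⊆ (closure s).centralizer := by
  have hcl : closure s ⊆ s.centralizer := closure_minimal hs (isClosed_centralizer s)
  have hs' : s ⊆ (closure s).centralizer := fun a ha b hb => (hcl hb a ha).symm
  exact closure_minimal hs' (isClosed_centralizer _)

theorem stmt_8_general (R : Type*) [NormedAddCommGroup R] [NormedSpace ℝ R]
    (G : Set (R →L[ℝ] R))
    (hcomm : ∀ A ∈ G, ∀ B ∈ G, A.comp B = B.comp A)
    (S T : R →L[ℝ] R)
    (hS : (ContinuousLinearMapWOT.ofCLM S : R →WOT[ℝ] R) ∈
      closure ((fun A => (ContinuousLinearMapWOT.ofCLM A : R →WOT[ℝ] R)) '' G))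
    (hT : (ContinuousLinearMapWOT.ofCLM T : R →WOT[ℝ] R) ∈
      closure ((fun A => (ContinuousLinearMapWOT.ofCLM A : R →WOT[ℝ] R)) '' G)) :
    S.comp T = T.comp S := by
  have hG : (fun A => (ContinuousLinearMapWOT.ofCLM A : R →WOT[ℝ] R)) '' G ⊆
      ((fun A => (ContinuousLinearMapWOT.ofCLM A : R →WOT[ℝ] R)) '' G).centralizer := by
    rintro _ ⟨B, hB, rfl⟩ _ ⟨A, hA, rfl⟩
    exact congrArg ContinuousLinearMapWOT.ofCLM (hcomm A hA B hB)
  -- Composition is separately WOT-continuous, and the WOT is Hausdorff since the dual separates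
  -- points (Hahn–Banach).
  exact congrArg ContinuousLinearMapWOT.toCLM (Set.closure_subset_centralizer_closure hG hT _ hS)

/-- Let `R` be a reflexive real Banach space and `G ⊆ L(R)` a commuting set
of surjective linear isometries of `R`. Any two elements of the closure of `G` in the weak
operator topology commute. -/
theorem stmt_8 (R : Type*) [NormedAddCommGroup R] [NormedSpace ℝ R] [CompleteSpace R]
    (hrefl : Function.Surjective (NormedSpace.inclusionInDoubleDual ℝ R))
    (G : Set (R →L[ℝ] R))
    (hiso : ∀ A ∈ G, Function.Surjective A ∧ ∀ r : R, ‖A r‖ = ‖r‖)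
    (hcomm : ∀ A ∈ G, ∀ B ∈ G, A.comp B = B.comp A)
    (S T : R →L[ℝ] R)
    (hS : (ContinuousLinearMapWOT.ofCLM S : R →WOT[ℝ] R) ∈
      closure ((fun A => (ContinuousLinearMapWOT.ofCLM A : R →WOT[ℝ] R)) '' G))
    (hT : (ContinuousLinearMapWOT.ofCLM T : R →WOT[ℝ] R) ∈
      closure ((fun A => (ContinuousLinearMapWOT.ofCLM A : R →WOT[ℝ] R)) '' G)) :
    S.comp T = T.comp S :=
  stmt_8_general R G hcomm S T hS hT
end

section
/- Let X be a real normed space. For x ∈ X let f_x : X → ℝ be the function f_x(w) = exp(−‖w − x‖). Then for all y, z ∈ X: 1 − exp(−‖y − z‖) ≤ sup_{w ∈ X} |f_y(w) − f_z(w)| ≤ ‖y − z‖. Consequently, the map x ↦ f_x from X into C_b(X; ℝ) (with the supremum norm) is injective and is a homeomorphism onto its image. -/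
open Filter Topology OnePoint

lemma exp_neg_lipschitz {a b : ℝ} (ha : 0 ≤ a) (hb : 0 ≤ b) :
    |Real.exp (-a) - Real.exp (-b)| ≤ |a - b| := by
  wlog h : a ≤ b generalizing a b
  · rw [abs_sub_comm, abs_sub_comm a b]; exact this hb ha (le_of_not_ge h)
  have h1 : Real.exp (-b) ≤ Real.exp (-a) := Real.exp_le_exp.mpr (by linarith)
  rw [abs_of_nonneg (by linarith), abs_of_nonpos (by linarith), neg_sub]
  have h2 : Real.exp (-a) - Real.exp (-b) = Real.exp (-a) * (1 - Real.exp (a - b)) := by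
    rw [mul_sub, mul_one, ← Real.exp_add]; ring_nf
  have h3 : 1 - Real.exp (a - b) ≤ b - a := by
    have := Real.add_one_le_exp (a - b); linarith
  have h4 : Real.exp (-a) ≤ 1 := Real.exp_le_one_iff.mpr (by linarith)
  have h5 : 0 ≤ 1 - Real.exp (a - b) := by
    have : Real.exp (a - b) ≤ 1 := Real.exp_le_one_iff.mpr (by linarith)
    linarith
  nlinarith [Real.exp_pos (-a)]



/-- The bounded continuous function `f_x : w ↦ exp (−‖w − x‖)` on `X`. -/
noncomputable def expFun (X : Type*) [NormedAddCommGroup X] (x : X) :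
    BoundedContinuousFunction X ℝ :=
  BoundedContinuousFunction.ofNormedAddCommGroup (fun w => Real.exp (-‖w - x‖))
    (by continuity) 1 (fun w => by
      rw [Real.norm_eq_abs, abs_of_pos (Real.exp_pos _)]
      exact Real.exp_le_one_iff.mpr (neg_nonpos.mpr (norm_nonneg _)))


lemma expFun_apply (X : Type*) [NormedAddCommGroup X] (x w : X) :
    expFun X x w = Real.exp (-‖w - x‖) := rfl

lemma expFun_norm_sub (X : Type*) [NormedAddCommGroup X] (y z : X) :
    ‖expFun X y - expFun X z‖ = ⨆ w : X, |Real.exp (-‖w - y‖) - Real.exp (-‖w - z‖)| := by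
  rw [BoundedContinuousFunction.norm_eq_iSup_norm]
  simp [expFun_apply, Real.norm_eq_abs]

lemma expFun_upper (X : Type*) [NormedAddCommGroup X] (y z : X) (w : X) :
    |Real.exp (-‖w - y‖) - Real.exp (-‖w - z‖)| ≤ ‖y - z‖ := by
  refine le_trans (exp_neg_lipschitz (norm_nonneg _) (norm_nonneg _)) ?_
  have h := abs_norm_sub_norm_le (w - y) (w - z)
  have h2 : (w - y) - (w - z) = z - y := by abel
  rw [h2, norm_sub_rev z y] at h
  exact h

lemma expFun_lower (X : Type*) [NormedAddCommGroup X] (y z : X) :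
    1 - Real.exp (-‖y - z‖) ≤ ⨆ w : X, |Real.exp (-‖w - y‖) - Real.exp (-‖w - z‖)| := by
  have hbdd : BddAbove (Set.range fun w : X => |Real.exp (-‖w - y‖) - Real.exp (-‖w - z‖)|) :=
    ⟨‖y - z‖, by rintro _ ⟨w, rfl⟩; exact expFun_upper X y z w⟩
  have h := le_ciSup hbdd y
  simpa [sub_self, Real.exp_zero,
    abs_of_nonneg (sub_nonneg.mpr (Real.exp_le_one_iff.mpr (neg_nonpos.mpr (norm_nonneg _))))]
    using h

/-- For a real normed space `X` and `f_x(w) = exp (−‖w − x‖)` one has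
`1 − exp (−‖y − z‖) ≤ sup_w |f_y(w) − f_z(w)| ≤ ‖y − z‖`; consequently `x ↦ f_x` is injective
and a homeomorphism from `X` onto its image in `C_b(X; ℝ)`. -/
theorem stmt_9 (X : Type*) [NormedAddCommGroup X] [NormedSpace ℝ X] :
    (∀ y z : X,
      1 - Real.exp (-‖y - z‖) ≤
        (⨆ w : X, |Real.exp (-‖w - y‖) - Real.exp (-‖w - z‖)|) ∧
      (⨆ w : X, |Real.exp (-‖w - y‖) - Real.exp (-‖w - z‖)|) ≤ ‖y - z‖) ∧
    Function.Injective (fun x : X => expFun X x) ∧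
    Topology.IsEmbedding (fun x : X => expFun X x) := by
  have hinj : Function.Injective (fun x : X => expFun X x) := by
    intro y z h
    have h' : expFun X y = expFun X z := h
    have h0 : expFun X y y = expFun X z y := by rw [h']
    simp only [expFun_apply, sub_self, norm_zero, neg_zero, Real.exp_zero] at h0
    have : ‖y - z‖ = 0 := by
      by_contra hne
      have hp : 0 < ‖y - z‖ := lt_of_le_of_ne (norm_nonneg _) (Ne.symm hne)
      have : Real.exp (-‖y - z‖) < 1 := Real.exp_lt_one_iff.mpr (by linarith)
      linarith
    exact sub_eq_zero.mp (norm_eq_zero.mp this)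
  have hlip : LipschitzWith 1 (fun x : X => expFun X x) := by
    refine LipschitzWith.of_dist_le_mul fun y z => ?_
    rw [dist_eq_norm, dist_eq_norm, expFun_norm_sub]
    simpa using ciSup_le (expFun_upper X y z)
  refine ⟨fun y z => ⟨expFun_lower X y z, ciSup_le (expFun_upper X y z)⟩, hinj, ?_⟩
  rw [Topology.isEmbedding_iff]
  refine ⟨Topology.isInducing_iff_nhds.mpr fun x => ?_, hinj⟩
  refine le_antisymm (tendsto_iff_comap.mp (hlip.continuous.tendsto x)) ?_
  intro s hs
  rw [Metric.mem_nhds_iff] at hs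
  obtain ⟨ε, hε, hball⟩ := hs
  rw [Filter.mem_comap]
  have hδ : 0 < 1 - Real.exp (-ε) := by
    have : Real.exp (-ε) < 1 := Real.exp_lt_one_iff.mpr (by linarith)
    linarith
  refine ⟨Metric.ball (expFun X x) (1 - Real.exp (-ε)), Metric.ball_mem_nhds _ hδ, ?_⟩
  intro y hy
  apply hball
  simp only [Set.mem_preimage, Metric.mem_ball, dist_eq_norm] at hy ⊢
  have hlow : 1 - Real.exp (-‖y - x‖) ≤ ‖expFun X y - expFun X x‖ := by
    rw [expFun_norm_sub]; exact expFun_lower X y x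
  have h1 : Real.exp (-ε) < Real.exp (-‖y - x‖) := by linarith
  have h2 := Real.exp_lt_exp.mp h1
  linarith
end
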